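/- arXiv:1504.02695 — 9 statements merged into one kernel-verified Lean document; each statement's English description precedes it below -/
import Mathlib

section
/- Let m be an infinite frieze with quiddity row (a_i)_{i∈ℤ} (a_i = m_{ii}). Then for all i ≤ j, the entry m_{ij} equals the determinant of the (j−i+1)×(j−i+1) tridiagonal matrix M whose diagonal entries are M_{r,r} = a_{i+r} for 0 ≤ r ≤ j−i, whose super- and sub-diagonal entries are M_{r,r+1} = M_{r+1,r} = 1, and whose remaining entries are 0. -/
/-- An infinite frieze of positive integers: `m i j = 0` for `j < i - 2`,
`m i (i-2) = 0`, `m i (i-1) = 1`, `m i j > 0` for `i ≤ j`, and the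
unimodular rule holds for every diamond with `j ≥ i - 1`. -/
def IsInfiniteFrieze (m : ℤ → ℤ → ℤ) : Prop :=
  (∀ i j : ℤ, j < i - 2 → m i j = 0) ∧
  (∀ i : ℤ, m i (i - 2) = 0) ∧
  (∀ i : ℤ, m i (i - 1) = 1) ∧
  (∀ i j : ℤ, i ≤ j → 0 < m i j) ∧
  (∀ i j : ℤ, i - 1 ≤ j →
    m i j * m (i + 1) (j + 1) - m (i + 1) j * m i (j + 1) = 1)

/-- Tridiagonal matrix with diagonal `g i, g (i+1), ..., g (i+n)`. -/
def friezeTri (g : ℤ → ℤ) (i : ℤ) (n : ℕ) : Matrix (Fin (n + 1)) (Fin (n + 1)) ℤ :=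
  Matrix.of fun r s : Fin (n + 1) =>
    if (r : ℕ) = (s : ℕ) then g (i + (r : ℕ))
    else if (r : ℕ) + 1 = (s : ℕ) ∨ (s : ℕ) + 1 = (r : ℕ) then 1
    else 0

lemma friezeTri_det_zero (g : ℤ → ℤ) (i : ℤ) :
    (friezeTri g i 0).det = g i := by
  simp [friezeTri, Matrix.det_fin_one]

lemma friezeTri_det_one (g : ℤ → ℤ) (i : ℤ) :
    (friezeTri g i 1).det = g i * g (i + 1) - 1 := by
  simp [friezeTri, Matrix.det_fin_two]

set_option linter.unreachableTactic false in
set_option linter.unusedTactic false in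
lemma friezeTri_det_rec (g : ℤ → ℤ) (i : ℤ) (n : ℕ) :
    (friezeTri g i (n + 2)).det
      = g i * (friezeTri g (i + 1) (n + 1)).det - (friezeTri g (i + 2) n).det := by
  set M := friezeTri g i (n + 2) with hM
  have hA : (1 : Fin (n + 3)).succAbove 0 = 0 := by
    apply Fin.succAbove_of_castSucc_lt
    simp [Fin.lt_def]
  have hB : ∀ s : Fin (n + 1), (1 : Fin (n + 3)).succAbove s.succ = s.succ.succ := by
    intro s
    apply Fin.succAbove_of_le_castSucc
    simp [Fin.le_def]
  rw [Matrix.det_succ_row_zero, Fin.sum_univ_succ, Fin.sum_univ_succ, Fin.succ_zero_eq_one]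
  have htail : ∀ j : Fin (n + 1), M 0 j.succ.succ = 0 := by
    intro j
    have hv : ((j.succ.succ : Fin (n + 3)) : ℕ) = (j : ℕ) + 2 := by simp
    have hz : ((0 : Fin (n + 3)) : ℕ) = 0 := rfl
    simp only [hM, friezeTri, Matrix.of_apply, hz, hv]
    split_ifs <;> simp_all <;> omega
  have hsum0 : (∑ j : Fin (n + 1),
      (-1 : ℤ) ^ ((j.succ.succ : Fin (n + 3)) : ℕ) * M 0 j.succ.succ *
        (M.submatrix Fin.succ (j.succ.succ).succAbove).det) = 0 := by
    apply Finset.sum_eq_zero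
    intro j _
    rw [htail j]; ring
  rw [hsum0]
  have h00 : M 0 0 = g i := by simp [hM, friezeTri]
  have h01 : M 0 1 = 1 := by simp [hM, friezeTri]
  have hmin0 : M.submatrix Fin.succ (Fin.succAbove 0) = friezeTri g (i + 1) (n + 1) := by
    ext r s
    simp only [hM, friezeTri, Matrix.submatrix_apply, Matrix.of_apply, Fin.succAbove_zero,
      Fin.val_succ]
    split_ifs <;> first | rfl | (exfalso; omega) | (congr 1; push_cast; ring)
  have hmin1 : (M.submatrix Fin.succ (Fin.succAbove 1)).det = (friezeTri g (i + 2) n).det := by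
    set N := M.submatrix Fin.succ (Fin.succAbove 1) with hN
    rw [Matrix.det_succ_column_zero, Fin.sum_univ_succ]
    have hc : ∀ r : Fin (n + 1), N r.succ 0 = 0 := by
      intro r
      have hz : ((0 : Fin (n + 3)) : ℕ) = 0 := rfl
      simp only [hN, hM, friezeTri, Matrix.submatrix_apply, Matrix.of_apply, hA,
        Fin.val_succ, hz]
      split_ifs <;> simp_all <;> omega
    have hsum : (∑ r : Fin (n + 1),
        (-1 : ℤ) ^ ((r.succ : Fin (n + 2)) : ℕ) * N r.succ 0 *
          (N.submatrix r.succ.succAbove Fin.succ).det) = 0 := by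
      apply Finset.sum_eq_zero
      intro r _
      rw [hc r]; ring
    rw [hsum]
    have hN00 : N 0 0 = 1 := by
      simp only [hN, hM, friezeTri, Matrix.submatrix_apply, Matrix.of_apply, hA]
      simp
    have hrest : N.submatrix (Fin.succAbove 0) Fin.succ = friezeTri g (i + 2) n := by
      ext r s
      simp only [hN, hM, friezeTri, Matrix.submatrix_apply, Matrix.of_apply,
        Fin.succAbove_zero, hB, Fin.val_succ]
      split_ifs <;> first | rfl | (exfalso; omega) | (congr 1; push_cast; ring)
    rw [hN00, hrest]
    simp
  rw [h00, h01, hmin0, hmin1]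
  simp
  ring

lemma frieze_pos' (m : ℤ → ℤ → ℤ) (hm : IsInfiniteFrieze m) :
    ∀ i j : ℤ, i - 1 ≤ j → 0 < m i j := by
  obtain ⟨h0, h2, h1, hpos, hdiam⟩ := hm
  intro i j hij
  rcases lt_or_ge j i with h | h
  · have : j = i - 1 := by omega
    rw [this, h1]; norm_num
  · exact hpos i j h

/-- Column recursion for an infinite frieze. -/
lemma frieze_col_rec (m : ℤ → ℤ → ℤ) (hm : IsInfiniteFrieze m) :
    ∀ n : ℕ, ∀ i : ℤ, m i (i + n) = m i i * m (i + 1) (i + n) - m (i + 2) (i + n) := by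
  have hm' := hm
  obtain ⟨h0, h2, h1, hpos, hdiam⟩ := hm
  intro n
  induction n with
  | zero =>
    intro i
    have e1 : m (i + 1) i = 1 := by have := h1 (i + 1); rwa [show i + 1 - 1 = i by ring] at this
    have e2 : m (i + 2) i = 0 := by have := h2 (i + 2); rwa [show i + 2 - 2 = i by ring] at this
    push_cast
    rw [show i + (0:ℤ) = i by ring, e1, e2]
    ring
  | succ n ih =>
    intro i
    set j : ℤ := i + n with hj
    have hj1 : i + ((n : ℕ) + 1 : ℤ) = j + 1 := by push_cast [hj]; ring
    have hcast : ((n + 1 : ℕ) : ℤ) = (n : ℤ) + 1 := by push_cast; ring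
    rw [hcast, hj1]
    have hd1 := hdiam i j (by omega)
    have hd2 := hdiam (i + 1) j (by omega)
    rw [show i + 1 + 1 = i + 2 by ring] at hd2
    have hIH := ih i
    rw [← hj] at hIH
    have hne : m (i + 1) j ≠ 0 := by
      have := frieze_pos' m hm' (i + 1) j (by omega)
      omega
    have key : m (i + 1) j * m i (j + 1)
        = m (i + 1) j * (m i i * m (i + 1) (j + 1) - m (i + 2) (j + 1)) := by
      linear_combination -hd1 + hd2 + m (i + 1) (j + 1) * hIH
    exact mul_left_cancel₀ hne key

lemma frieze_entry_aux (m : ℤ → ℤ → ℤ) (hm : IsInfiniteFrieze m) :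
    ∀ n : ℕ, ∀ i : ℤ, m i (i + n) = (friezeTri (fun k => m k k) i n).det := by
  intro n
  induction n using Nat.twoStepInduction with
  | zero =>
    intro i
    rw [friezeTri_det_zero]
    norm_num
  | one =>
    intro i
    rw [friezeTri_det_one]
    obtain ⟨h0, h2, h1, hpos, hdiam⟩ := hm
    have hd := hdiam i i (by omega)
    have e1 : m (i + 1) i = 1 := by have := h1 (i + 1); rwa [show i + 1 - 1 = i by ring] at this
    push_cast
    rw [e1] at hd
    linarith [hd]
  | more n ih1 ih2 =>
    intro i
    have hrec := frieze_col_rec m hm (n + 2) i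
    have e1 : i + 1 + ((n + 1 : ℕ) : ℤ) = i + ((n + 2 : ℕ) : ℤ) := by push_cast; ring
    have e2 : i + 2 + ((n : ℕ) : ℤ) = i + ((n + 2 : ℕ) : ℤ) := by push_cast; ring
    have hA := ih2 (i + 1)
    have hB := ih1 (i + 2)
    rw [e1] at hA
    rw [e2] at hB
    rw [friezeTri_det_rec, hrec, hA, hB]

/-- Each entry of an infinite frieze is the determinant of a tridiagonal matrix
whose diagonal is the corresponding stretch of the quiddity row and whose
super- and sub-diagonal entries are 1. -/
theorem frieze_entry_eq_tridiagonal_det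
    (m : ℤ → ℤ → ℤ) (hm : IsInfiniteFrieze m) :
    ∀ i j : ℤ, i ≤ j →
      m i j = Matrix.det (Matrix.of fun r s : Fin ((j - i).toNat + 1) =>
        if (r : ℕ) = (s : ℕ) then m (i + (r : ℕ)) (i + (r : ℕ))
        else if (r : ℕ) + 1 = (s : ℕ) ∨ (s : ℕ) + 1 = (r : ℕ) then 1
        else 0) := by
  intro i j hij
  have hj : j = i + ((j - i).toNat : ℤ) := by omega
  have h := frieze_entry_aux m hm (j - i).toNat i
  rw [← hj] at h
  exact h
end

section
/- Let m = (m_{ij}) be an infinite frieze. Then for all i, j, k with i ≤ j and i ≤ k ≤ j+1, the identity m_{ij} = m_{i,k−1}·m_{kj} − m_{i,k−2}·m_{k+1,j} holds. -/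
/-- The relation `m i j = m i (k-1) * m k j - m i (k-2) * m (k+1) j`
for `i ≤ k ≤ j + 1`. -/
theorem frieze_splitting_relation
    (m : ℤ → ℤ → ℤ) (hm : IsInfiniteFrieze m) :
    ∀ i j k : ℤ, i ≤ j → i ≤ k → k ≤ j + 1 →
      m i j = m i (k - 1) * m k j - m i (k - 2) * m (k + 1) j := by
  obtain ⟨hz, h2, h1, hpos, hr⟩ := hm
  -- column recursion with coefficient c(i,j)
  have col1 : ∀ i j : ℤ, i ≤ j → m i (j+1) =
      (m i (j-1) * m (i+1) (j+1) - m (i+1) (j-1) * m i (j+1)) * m i j - m i (j-1) := by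
    intro i j hij
    have A := hr i j (by linarith)
    have B := hr i (j-1) (by linarith)
    rw [show j - 1 + 1 = j by ring] at B
    linear_combination (- m i (j-1)) * A - (m i (j+1)) * B
  have col2 : ∀ i j : ℤ, i ≤ j → m (i+1) (j+1) =
      (m i (j-1) * m (i+1) (j+1) - m (i+1) (j-1) * m i (j+1)) * m (i+1) j - m (i+1) (j-1) := by
    intro i j hij
    have A := hr i j (by linarith)
    have B := hr i (j-1) (by linarith)
    rw [show j - 1 + 1 = j by ring] at B
    linear_combination (- m (i+1) (j-1)) * A - (m (i+1) (j+1)) * B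
  have cconst : ∀ j i : ℤ, i ≤ j →
      m i (j-1) * m (i+1) (j+1) - m (i+1) (j-1) * m i (j+1) = m (j+1) (j+1) := by
    intro j
    refine Int.le_induction_down ?_ ?_
    · have e1 := h1 j
      have e2 := h2 (j+1)
      rw [show j + 1 - 2 = j - 1 by ring] at e2
      rw [e1, e2]
      ring
    · intro i hij IH
      have e1 := col2 (i-1) j (by linarith)
      have e2 := col1 i j hij
      rw [show i - 1 + 1 = i by ring] at e1
      have hp := hpos i j hij
      have h0 : ((m (i-1) (j-1) * m i (j+1) - m i (j-1) * m (i-1) (j+1)) -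
          (m i (j-1) * m (i+1) (j+1) - m (i+1) (j-1) * m i (j+1))) * m i j = 0 := by
        linear_combination e2 - e1
      rcases mul_eq_zero.mp h0 with h | h
      · rw [show i - 1 + 1 = i by ring, ← IH]; linarith
      · omega
  have colrec : ∀ i j : ℤ, i ≤ j → m i (j+1) = m (j+1) (j+1) * m i j - m i (j-1) := by
    intro i j hij
    rw [← cconst j i hij]; exact col1 i j hij
  -- row recursion with coefficient d(i,j)
  have row1 : ∀ i j : ℤ, i ≤ j → m i j =
      (m i j * m (i+2) (j+1) - m (i+2) j * m i (j+1)) * m (i+1) j - m (i+2) j := by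
    intro i j hij
    have A := hr i j (by linarith)
    have B := hr (i+1) j (by linarith)
    rw [show i + 1 + 1 = i + 2 by ring] at B
    linear_combination (- m (i+2) j) * A - (m i j) * B
  have row2 : ∀ i j : ℤ, i ≤ j → m i (j+1) =
      (m i j * m (i+2) (j+1) - m (i+2) j * m i (j+1)) * m (i+1) (j+1) - m (i+2) (j+1) := by
    intro i j hij
    have A := hr i j (by linarith)
    have B := hr (i+1) j (by linarith)
    rw [show i + 1 + 1 = i + 2 by ring] at B
    linear_combination (- m (i+2) (j+1)) * A - (m i (j+1)) * B
  have dconst : ∀ i j : ℤ, i ≤ j →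
      m i j * m (i+2) (j+1) - m (i+2) j * m i (j+1) = m i i := by
    intro i
    refine Int.le_induction ?_ ?_
    · have e2 := h2 (i+2)
      have e3 := h1 (i+2)
      rw [show i + 2 - 2 = i by ring] at e2
      rw [show i + 2 - 1 = i + 1 by ring] at e3
      rw [e2, e3]
      ring
    · intro j hij IH
      have e1 := row2 i j hij
      have e2 := row1 i (j+1) (by linarith)
      have hp := hpos (i+1) (j+1) (by linarith)
      have h0 : ((m i j * m (i+2) (j+1) - m (i+2) j * m i (j+1)) -
          (m i (j+1) * m (i+2) (j+1+1) - m (i+2) (j+1) * m i (j+1+1))) * m (i+1) (j+1) = 0 := by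
        linear_combination e2 - e1
      rcases mul_eq_zero.mp h0 with h | h
      · rw [← IH]; linarith
      · omega
  have rowrec : ∀ i j : ℤ, i ≤ j → m i j = m i i * m (i+1) j - m (i+2) j := by
    intro i j hij
    rw [← dconst i j hij]; exact row1 i j hij
  -- main induction on k
  intro i j k hij hik hkj
  have key : ∀ k : ℤ, i ≤ k → k ≤ j + 1 →
      m i j = m i (k - 1) * m k j - m i (k - 2) * m (k + 1) j := by
    refine Int.le_induction ?_ ?_
    · intro _
      rw [h1 i, h2 i]; ring
    · intro k hk IH hk1
      have IH := IH (by linarith)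
      have hkj' : k ≤ j := by linarith
      rw [show k + 1 - 1 = k by ring, show k + 1 - 2 = k - 1 by ring,
        show k + 1 + 1 = k + 2 by ring]
      rcases eq_or_lt_of_le hk with heq | hk'
      · subst heq
        have e3 := rowrec i j hij
        rw [h1 i]
        linarith [e3]
      · have hik1 : i ≤ k - 1 := by linarith
        have e1 := rowrec k j hkj'
        have e2 := colrec i (k-1) hik1
        rw [show k - 1 + 1 = k by ring, show k - 1 - 1 = k - 2 by ring] at e2
        linear_combination IH + m i (k-1) * e1 - m (k+1) j * e2
  exact key k hik hkj
end

section
/- Let m be an infinite frieze with quiddity row (a_i)_{i∈ℤ}, let k ∈ ℤ and let b be a positive integer. Define m'_{ij} = m_{ij} + b·m_{i,k−1}·m_{k+1,j} for all i, j (with the convention m_{ij} = 0 for j < i − 2). Then m' is an infinite frieze, its quiddity row (a'_i) satisfies a'_k = a_k + b and a'_i = a_i for i ≠ k, and m'_{ij} = m_{ij} whenever i > k or j < k (i.e., outside the cone with peak at position (k,k)). -/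
/-- Increasing one quiddity entry by `b > 0` yields again an infinite frieze,
whose entries are `m i j + b * m i (k-1) * m (k+1) j`; outside the cone with
peak at `(k,k)` the entries are unchanged. -/
theorem frieze_increase_quiddity_entry
    (m : ℤ → ℤ → ℤ) (hm : IsInfiniteFrieze m) (k : ℤ) (b : ℤ) (hb : 0 < b) :
    IsInfiniteFrieze (fun i j => m i j + b * m i (k - 1) * m (k + 1) j) ∧
    (fun i j => m i j + b * m i (k - 1) * m (k + 1) j) k k = m k k + b ∧
    (∀ i : ℤ, i ≠ k →
      (fun i j => m i j + b * m i (k - 1) * m (k + 1) j) i i = m i i) ∧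
    (∀ i j : ℤ, (k < i ∨ j < k) →
      (fun i j => m i j + b * m i (k - 1) * m (k + 1) j) i j = m i j) := by
  obtain ⟨h0, h2, h1, hpos, huni⟩ := hm
  -- nonnegativity everywhere
  have hnn : ∀ i j : ℤ, 0 ≤ m i j := by
    intro i j
    rcases lt_or_ge j (i - 2) with h | h
    · rw [h0 i j h]
    rcases eq_or_lt_of_le h with h' | h'
    · rw [← h', h2]
    rcases lt_or_ge j i with h'' | h''
    · have hj : j = i - 1 := by omega
      rw [hj, h1]; norm_num
    · exact le_of_lt (hpos i j h'')
  -- c_i := m i (k-1) vanishes for i ≥ k+1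
  have czero : ∀ i : ℤ, k + 1 ≤ i → m i (k - 1) = 0 := by
    intro i hi
    rcases eq_or_lt_of_le hi with h | h
    · have := h2 i
      rw [show i - 2 = k - 1 by omega] at this
      exact this
    · exact h0 i (k - 1) (by omega)
  -- d_j := m (k+1) j vanishes for j ≤ k-1
  have dzero : ∀ j : ℤ, j ≤ k - 1 → m (k + 1) j = 0 := by
    intro j hj
    rcases eq_or_lt_of_le hj with h | h
    · have := h2 (k + 1)
      rw [show k + 1 - 2 = k - 1 by omega] at this
      rw [h]; exact this
    · exact h0 (k + 1) j (by omega)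
  have hck : m k (k - 1) = 1 := h1 k
  have hdk : m (k + 1) k = 1 := by
    have := h1 (k + 1)
    rwa [show k + 1 - 1 = k by ring] at this
  -- row recurrence
  have hrecAux : ∀ n : ℕ, ∀ i j : ℤ, i - 1 ≤ j → (j - i + 1).toNat = n →
      m i (j + 1) = m (j + 1) (j + 1) * m i j - m i (j - 1) := by
    intro n
    induction n using Nat.strong_induction_on with
    | _ n IH =>
      intro i j hij hn
      rcases eq_or_lt_of_le hij with hbase | h
      · -- j = i - 1
        have hj : j = i - 1 := hbase.symm
        subst hj
        rw [show i - 1 + 1 = i by ring, show i - 1 - 1 = i - 2 by ring, h1, h2]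
        ring
      rcases eq_or_lt_of_le (show i ≤ j by omega) with hbase1 | h2'
      · -- j = i
        subst hbase1
        have A := huni i i (by omega)
        have e1 : m (i + 1) i = 1 := by
          have := h1 (i + 1); rwa [show i + 1 - 1 = i by ring] at this
        have e2 : m i (i - 1) = 1 := h1 i
        linear_combination -A + e2 - m i (i + 1) * e1
      · -- j ≥ i + 1
        have A := huni i j (by omega)
        have B := huni i (j - 1) (by omega)
        rw [show j - 1 + 1 = j by ring] at B
        have hIH := IH (j - (i + 1) + 1).toNat (by omega) (i + 1) j (by omega) rfl
        have hp : (0:ℤ) < m (i + 1) j := hpos (i + 1) j (by omega)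
        have key : m (i + 1) j *
            (m (j + 1) (j + 1) * m i j - m i (j - 1) - m i (j + 1)) = 0 := by
          linear_combination A - B - m i j * hIH
        rcases mul_eq_zero.mp key with h' | h'
        · exact absurd h' hp.ne'
        · linarith
  have rowRec : ∀ i j : ℤ, i - 1 ≤ j →
      m i (j + 1) = m (j + 1) (j + 1) * m i j - m i (j - 1) :=
    fun i j h => hrecAux _ i j h rfl
  -- Wronskian identity
  have hWAux : ∀ n : ℕ, ∀ i j : ℤ, i ≤ k + 1 → k - 1 ≤ j → (j - (k - 1)).toNat = n →
      m (k + 1) j * m i (j + 1) - m (k + 1) (j + 1) * m i j = - m i (k - 1) := by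
    intro n
    induction n with
    | zero =>
      intro i j hik hj hn
      have hj' : j = k - 1 := by omega
      subst hj'
      rw [show k - 1 + 1 = k by ring, dzero (k - 1) le_rfl, hdk]
      ring
    | succ n IH =>
      intro i j hik hj hn
      have hj' : k ≤ j := by omega
      have hIH := IH i (j - 1) hik (by omega) (by omega)
      rw [show j - 1 + 1 = j by ring] at hIH
      have r1 := rowRec i j (by omega)
      have r2 := rowRec (k + 1) j (by omega)
      linear_combination hIH + m (k + 1) j * r1 - m i j * r2
  have hW : ∀ i j : ℤ, i ≤ k + 1 → k - 1 ≤ j →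
      m (k + 1) j * m i (j + 1) - m (k + 1) (j + 1) * m i j = - m i (k - 1) :=
    fun i j hi hj => hWAux _ i j hi hj rfl
  refine ⟨⟨?_, ?_, ?_, ?_, ?_⟩, ?_, ?_, ?_⟩
  · -- zero below
    intro i j hij
    simp only
    rcases le_or_gt i k with h | h
    · rw [h0 i j hij, dzero j (by omega)]; ring
    · rw [h0 i j hij, czero i (by omega)]; ring
  · -- m i (i-2) = 0
    intro i
    simp only
    rcases le_or_gt i k with h | h
    · rw [h2 i, dzero (i - 2) (by omega)]; ring
    · rw [h2 i, czero i (by omega)]; ring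
  · -- m i (i-1) = 1
    intro i
    simp only
    rcases le_or_gt i k with h | h
    · rw [h1 i, dzero (i - 1) (by omega)]; ring
    · rw [h1 i, czero i (by omega)]; ring
  · -- positivity
    intro i j hij
    simp only
    have h1' : 0 ≤ b * m i (k - 1) * m (k + 1) j :=
      mul_nonneg (mul_nonneg hb.le (hnn i (k - 1))) (hnn (k + 1) j)
    linarith [hpos i j hij]
  · -- unimodularity
    intro i j hij
    simp only
    have A := huni i j hij
    rcases le_or_gt i k with hik | hik
    · rcases le_or_gt (k - 1) j with hjk | hjk
      · have W1 := hW i j (by omega) hjk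
        have W2 := hW (i + 1) j (by omega) hjk
        linear_combination A + b * m i (k - 1) * W2 - b * m (i + 1) (k - 1) * W1
      · rw [dzero j (by omega), dzero (j + 1) (by omega)]
        linear_combination A
    · rw [czero i (by omega), czero (i + 1) (by omega)]
      linear_combination A
  · -- quiddity at k
    simp only
    rw [hck, hdk]; ring
  · -- quiddity elsewhere
    intro i hi
    simp only
    rcases lt_or_gt_of_ne hi with h | h
    · rw [dzero i (by omega)]; ring
    · rw [czero i (by omega)]; ring
  · -- outside cone
    intro i j hij
    simp only
    rcases hij with h | h
    · rw [czero i (by omega)]; ring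
    · rw [dzero j (by omega)]; ring
end

section
/- Let (a_i)_{i∈ℤ} be the quiddity row of an infinite frieze and let (b_i)_{i∈ℤ} be a sequence of nonnegative integers such that b_i = 0 for all but finitely many i. Then there exists an infinite frieze whose quiddity row is (a_i + b_i)_{i∈ℤ}. -/
/-- Every infinite frieze satisfies the three-term row recurrence. -/
lemma frieze_rec (m : ℤ → ℤ → ℤ) (hm : IsInfiniteFrieze m) :
    ∀ i j : ℤ, i - 1 ≤ j →
      m i (j + 1) = m (j + 1) (j + 1) * m i j - m i (j - 1) := by
  obtain ⟨h0, h1, h2, h3, h4⟩ := hm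
  have Q : ∀ n : ℕ, ∀ j : ℤ,
      m (j - n + 1) (j + 1) = m (j + 1) (j + 1) * m (j - n + 1) j - m (j - n + 1) (j - 1) := by
    have step : ∀ n : ℕ,
        (∀ j : ℤ, m (j - (n+1) + 1) (j + 1)
            = m (j + 1) (j + 1) * m (j - (n+1) + 1) j - m (j - (n+1) + 1) (j - 1)) →
        (∀ j : ℤ, m (j - (n+2) + 1) (j + 1)
            = m (j + 1) (j + 1) * m (j - (n+2) + 1) j - m (j - (n+2) + 1) (j - 1)) := by
      intro n ih j
      set i : ℤ := j - (n+2) + 1 with hi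
      have hiq : j - (n+1) + 1 = i + 1 := by omega
      have q := ih j
      rw [hiq] at q
      have d1 := h4 i j (by omega)
      have d2 := h4 i (j - 1) (by omega)
      rw [show j - 1 + 1 = j by ring] at d2
      have hpos := h3 (i + 1) j (by omega)
      have key : m (i+1) j * (m (j+1) (j+1) * m i j - m i (j-1) - m i (j+1)) = 0 := by
        linear_combination d1 - d2 - m i j * q
      have := mul_eq_zero.mp key
      rcases this with h | h
      · exact absurd h (by positivity)
      · linarith
    have base0 : ∀ j : ℤ, m (j - (0:ℕ) + 1) (j + 1)
        = m (j + 1) (j + 1) * m (j - (0:ℕ) + 1) j - m (j - (0:ℕ) + 1) (j - 1) := by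
      intro j
      have e1 : m (j+1) j = 1 := by have h := h2 (j+1); rw [show j+1-1 = j by ring] at h; exact h
      have e0 : m (j+1) (j-1) = 0 := by
        have h := h1 (j+1); rw [show j+1-2 = j-1 by ring] at h; exact h
      push_cast
      rw [show j - 0 + 1 = j + 1 by ring, e1, e0]; ring
    have base1 : ∀ j : ℤ, m (j - (1:ℕ) + 1) (j + 1)
        = m (j + 1) (j + 1) * m (j - (1:ℕ) + 1) j - m (j - (1:ℕ) + 1) (j - 1) := by
      intro j
      have e1 : m (j+1) j = 1 := by have h := h2 (j+1); rw [show j+1-1 = j by ring] at h; exact h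
      have e2 : m j (j-1) = 1 := h2 j
      have d1 := h4 j j (by omega)
      push_cast
      rw [show j - 1 + 1 = j by ring, e2]
      linear_combination -d1 - m j (j+1) * e1
    have pair : ∀ n : ℕ, (∀ j : ℤ, m (j - n + 1) (j + 1)
        = m (j + 1) (j + 1) * m (j - n + 1) j - m (j - n + 1) (j - 1)) ∧
        (∀ j : ℤ, m (j - (n+1) + 1) (j + 1)
        = m (j + 1) (j + 1) * m (j - (n+1) + 1) j - m (j - (n+1) + 1) (j - 1)) := by
      intro n
      induction n with
      | zero => exact ⟨base0, by exact_mod_cast base1⟩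
      | succ n ih => exact ⟨ih.2, step n ih.2⟩
    exact fun n => (pair n).1
  intro i j hij
  have hn : (0:ℤ) ≤ j + 1 - i := by omega
  have := Q (j + 1 - i).toNat j
  rw [show (j : ℤ) - ((j + 1 - i).toNat : ℤ) + 1 = i by omega] at this
  exact this

/-- Generic: the three-term recurrence plus boundary conditions yields the diamond rule. -/
lemma diamond_of_rec (M : ℤ → ℤ → ℤ) (c : ℤ → ℤ)
    (h1 : ∀ i : ℤ, M i (i - 2) = 0) (h2 : ∀ i : ℤ, M i (i - 1) = 1)
    (hrec : ∀ i j : ℤ, i - 1 ≤ j → M i (j + 1) = c (j + 1) * M i j - M i (j - 1)) :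
    ∀ i j : ℤ, i - 1 ≤ j →
      M i j * M (i + 1) (j + 1) - M (i + 1) j * M i (j + 1) = 1 := by
  intro i
  have base : M i (i-1) * M (i + 1) (i-1 + 1) - M (i + 1) (i-1) * M i (i-1 + 1) = 1 := by
    have e1 : M (i+1) (i - 1 + 1) = 1 := by
      have h := h2 (i+1); rw [show i+1-1 = i - 1 + 1 by ring] at h; exact h
    have e0 : M (i+1) (i-1) = 0 := by
      have h := h1 (i+1); rw [show i+1-2 = i-1 by ring] at h; exact h
    rw [h2 i, e1, e0]; ring
  have step : ∀ j, i - 1 ≤ j →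
      (M i j * M (i + 1) (j + 1) - M (i + 1) j * M i (j + 1) = 1) →
      (M i (j+1) * M (i + 1) (j+1 + 1) - M (i + 1) (j+1) * M i (j+1 + 1) = 1) := by
    intro j hij ih
    have r1 := hrec i (j + 1) (by omega)
    have r2 := hrec (i + 1) (j + 1) (by omega)
    rw [show j + 1 - 1 = j by ring] at r1 r2
    rw [r1, r2]
    linear_combination ih
  exact Int.le_induction base step

/-- Adding `1` to the quiddity row of an infinite frieze at a single position
yields the quiddity row of an infinite frieze. -/
lemma frieze_bump (m : ℤ → ℤ → ℤ) (hm : IsInfiniteFrieze m) (k : ℤ) :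
    ∃ M : ℤ → ℤ → ℤ, IsInfiniteFrieze M ∧
      ∀ i : ℤ, M i i = m i i + (if i = k then 1 else 0) := by
  obtain ⟨h0, h1, h2, h3, h4⟩ := hm
  have hrecm := frieze_rec m ⟨h0, h1, h2, h3, h4⟩
  set M : ℤ → ℤ → ℤ := fun i j =>
    m i j + (if i ≤ k ∧ k ≤ j then m i (k-1) * m (k+1) j else 0) with hM
  set c : ℤ → ℤ := fun t => m t t + (if t = k then 1 else 0) with hc
  have M0 : ∀ i j : ℤ, j < i - 2 → M i j = 0 := by
    intro i j hj
    simp only [hM]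
    rw [if_neg (show ¬(i ≤ k ∧ k ≤ j) by omega), h0 i j hj]; ring
  have M1 : ∀ i : ℤ, M i (i - 2) = 0 := by
    intro i
    simp only [hM]
    rw [if_neg (show ¬(i ≤ k ∧ k ≤ i - 2) by omega), h1 i]; ring
  have M2 : ∀ i : ℤ, M i (i - 1) = 1 := by
    intro i
    simp only [hM]
    rw [if_neg (show ¬(i ≤ k ∧ k ≤ i - 1) by omega), h2 i]; ring
  have M3 : ∀ i j : ℤ, i ≤ j → 0 < M i j := by
    intro i j hij
    simp only [hM]
    have hn : 0 ≤ (if i ≤ k ∧ k ≤ j then m i (k-1) * m (k+1) j else 0) := by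
      split
      · next h =>
        have hp : 0 < m i (k-1) := by
          rcases eq_or_lt_of_le h.1 with h' | h'
          · rw [show k - 1 = i - 1 by omega, h2 i]; norm_num
          · exact h3 i (k-1) (by omega)
        have hq : 0 < m (k+1) j := by
          rcases eq_or_lt_of_le h.2 with h' | h'
          · rw [show j = (k+1) - 1 by omega, h2 (k+1)]; norm_num
          · exact h3 (k+1) j (by omega)
        positivity
      · exact le_rfl
    have := h3 i j hij
    linarith
  have Mrec : ∀ i j : ℤ, i - 1 ≤ j → M i (j + 1) = c (j + 1) * M i j - M i (j - 1) := by
    intro i j hij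
    simp only [hM, hc]
    have r1 := hrecm i j hij
    by_cases hc1 : k < i ∨ j + 1 < k
    · rw [if_neg (show ¬(i ≤ k ∧ k ≤ j + 1) by omega),
        if_neg (show ¬(i ≤ k ∧ k ≤ j) by omega),
        if_neg (show ¬(i ≤ k ∧ k ≤ j - 1) by omega),
        if_neg (show ¬(j + 1 = k) by omega)]
      rw [r1]; ring
    · push_neg at hc1
      obtain ⟨hik, hkj⟩ := hc1
      by_cases hc2 : k ≤ j - 1
      · rw [if_pos (show i ≤ k ∧ k ≤ j + 1 by omega),
          if_pos (show i ≤ k ∧ k ≤ j by omega),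
          if_pos (show i ≤ k ∧ k ≤ j - 1 by omega),
          if_neg (show ¬(j + 1 = k) by omega)]
        have r2 := hrecm (k+1) j (by omega)
        rw [r1, r2]; ring
      · by_cases hc3 : k = j
        · rw [if_pos (show i ≤ k ∧ k ≤ j + 1 by omega),
            if_pos (show i ≤ k ∧ k ≤ j by omega),
            if_neg (show ¬(i ≤ k ∧ k ≤ j - 1) by omega),
            if_neg (show ¬(j + 1 = k) by omega)]
          have e0 : m (k+1) (j+1) = m (j+1) (j+1) := by rw [hc3]
          have e1 : m (k+1) j = 1 := by
            rw [show j = (k+1) - 1 by omega]; exact h2 (k+1)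
          rw [e0, e1, r1]; ring
        · have hkj1 : k = j + 1 := by omega
          rw [if_pos (show i ≤ k ∧ k ≤ j + 1 by omega),
            if_neg (show ¬(i ≤ k ∧ k ≤ j) by omega),
            if_neg (show ¬(i ≤ k ∧ k ≤ j - 1) by omega),
            if_pos (show j + 1 = k by omega)]
          have e1 : m (k+1) (j+1) = 1 := by
            rw [show j + 1 = (k+1) - 1 by omega]; exact h2 (k+1)
          have e2 : m i (k-1) = m i j := by rw [show k - 1 = j by omega]
          rw [e1, e2, r1]; ring
  have M4 := diamond_of_rec M c M1 M2 Mrec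
  refine ⟨M, ⟨M0, M1, M2, M3, M4⟩, ?_⟩
  intro i
  simp only [hM]
  by_cases hik : i = k
  · rw [if_pos (show i ≤ k ∧ k ≤ i by omega), if_pos hik]
    have e1 : m (k+1) i = 1 := by
      rw [show i = (k+1) - 1 by omega]; exact h2 (k+1)
    have e2 : m i (k-1) = 1 := by
      rw [show k - 1 = i - 1 by omega]; exact h2 i
    rw [e1, e2]; ring
  · rw [if_neg (show ¬(i ≤ k ∧ k ≤ i) by omega), if_neg hik]

/-- Induction on the total sum of the (finitely supported, nonnegative) added sequence. -/
lemma frieze_add_aux : ∀ N : ℕ, ∀ m : ℤ → ℤ → ℤ, IsInfiniteFrieze m →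
    ∀ b : ℤ → ℤ, (∀ i : ℤ, 0 ≤ b i) → ∀ s : Finset ℤ, (∀ i ∉ s, b i = 0) →
    (∑ i ∈ s, b i) ≤ (N : ℤ) →
    ∃ m' : ℤ → ℤ → ℤ, IsInfiniteFrieze m' ∧ ∀ i : ℤ, m' i i = m i i + b i := by
  intro N
  induction N with
  | zero =>
    intro m hm b hb s hs hsum
    have hzero : ∀ i : ℤ, b i = 0 := by
      intro i
      by_cases his : i ∈ s
      · have hall := (Finset.sum_eq_zero_iff_of_nonneg (s := s) (f := b)
          (fun j _ => hb j)).mp (le_antisymm (by exact_mod_cast hsum)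
          (Finset.sum_nonneg (fun j _ => hb j)))
        exact hall i his
      · exact hs i his
    exact ⟨m, hm, fun i => by rw [hzero i]; ring⟩
  | succ N ih =>
    intro m hm b hb s hs hsum
    by_cases hzero : ∀ i : ℤ, b i = 0
    · exact ⟨m, hm, fun i => by rw [hzero i]; ring⟩
    · push_neg at hzero
      obtain ⟨k, hk⟩ := hzero
      have hk1 : 1 ≤ b k := by have := hb k; omega
      have hks : k ∈ s := by
        by_contra h
        exact hk (hs k h)
      obtain ⟨m₁, hm₁, hq₁⟩ := frieze_bump m hm k
      set b' : ℤ → ℤ := fun i => b i - (if i = k then 1 else 0) with hb'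
      have hb'nn : ∀ i : ℤ, 0 ≤ b' i := by
        intro i
        simp only [hb']
        split
        · next h => subst h; omega
        · have := hb i; omega
      have hb's : ∀ i ∉ s, b' i = 0 := by
        intro i his
        simp only [hb']
        rw [if_neg (fun h => his (by rw [h]; exact hks)), hs i his]; ring
      have hsum' : (∑ i ∈ s, b' i) ≤ (N : ℤ) := by
        simp only [hb']
        rw [Finset.sum_sub_distrib, Finset.sum_ite_eq' s k (fun _ => (1:ℤ)), if_pos hks]
        push_cast at hsum ⊢
        omega
      obtain ⟨m', hm', hq'⟩ := ih m₁ hm₁ b' hb'nn s hb's hsum'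
      refine ⟨m', hm', fun i => ?_⟩
      rw [hq' i, hq₁ i]
      simp only [hb']
      ring

/-- Adding a finitely supported sequence of nonnegative integers to the quiddity
row of an infinite frieze yields the quiddity row of an infinite frieze. -/
theorem frieze_add_finitely_supported
    (m : ℤ → ℤ → ℤ) (hm : IsInfiniteFrieze m)
    (b : ℤ → ℤ) (hb : ∀ i : ℤ, 0 ≤ b i)
    (hfin : (Function.support b).Finite) :
    ∃ m' : ℤ → ℤ → ℤ, IsInfiniteFrieze m' ∧ ∀ i : ℤ, m' i i = m i i + b i := by
  refine frieze_add_aux (∑ i ∈ hfin.toFinset, b i).toNat m hm b hb hfin.toFinset ?_ ?_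
  · intro i his
    by_contra h
    exact his (hfin.mem_toFinset.mpr h)
  · exact Int.self_le_toNat _
end

section
/- Every infinite sequence (a_i)_{i∈ℤ} of integers with a_i ≥ 2 for all i is the quiddity row of an infinite frieze; that is, there exists an infinite frieze m with m_{ii} = a_i for all i ∈ ℤ. -/
/-- Continuant-style sequence: `gg a i n` will be `m i (i - 2 + n)`. -/
def gg (a : ℤ → ℤ) (i : ℤ) : ℕ → ℤ
  | 0 => 0
  | 1 => 1
  | (n + 2) => a (i + n) * gg a i (n + 1) - gg a i n

lemma gg_mono (a : ℤ → ℤ) (ha : ∀ i : ℤ, 2 ≤ a i) (i : ℤ) :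
    ∀ n : ℕ, 0 ≤ gg a i n ∧ gg a i n < gg a i (n + 1) := by
  intro n
  induction n with
  | zero => simp [gg]
  | succ n ih =>
    obtain ⟨h0, h1⟩ := ih
    have h2 : 0 ≤ gg a i (n + 1) := le_of_lt (lt_of_le_of_lt h0 h1)
    refine ⟨h2, ?_⟩
    have hrec : gg a i (n + 2) = a (i + n) * gg a i (n + 1) - gg a i n := rfl
    have ha' := ha (i + n)
    nlinarith [h0, h1, h2, ha']

lemma gg_pos (a : ℤ → ℤ) (ha : ∀ i : ℤ, 2 ≤ a i) (i : ℤ) (n : ℕ) :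
    0 < gg a i (n + 1) :=
  lt_of_le_of_lt (gg_mono a ha i n).1 (gg_mono a ha i n).2

lemma gg_det (a : ℤ → ℤ) (i : ℤ) :
    ∀ n : ℕ, gg a i (n + 1) * gg a (i + 1) (n + 1)
      - gg a (i + 1) n * gg a i (n + 2) = 1 := by
  intro n
  induction n with
  | zero => simp [gg]
  | succ n ih =>
    have h1 : gg a i (n + 3) = a (i + (n + 1 : ℕ)) * gg a i (n + 2) - gg a i (n + 1) := rfl
    have h2 : gg a (i + 1) (n + 2) = a (i + 1 + n) * gg a (i + 1) (n + 1) - gg a (i + 1) n := rfl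
    have hc : (i + ((n : ℤ) + 1)) = i + 1 + n := by ring
    push_cast at h1
    rw [hc] at h1
    calc gg a i (n + 1 + 1) * gg a (i + 1) (n + 1 + 1)
        - gg a (i + 1) (n + 1) * gg a i (n + 1 + 2)
        = gg a i (n + 2) * (a (i + 1 + n) * gg a (i + 1) (n + 1) - gg a (i + 1) n)
          - gg a (i + 1) (n + 1) * (a (i + 1 + n) * gg a i (n + 2) - gg a i (n + 1)) := by
          rw [show n + 1 + 1 = n + 2 from rfl, show n + 1 + 2 = n + 3 from rfl, h1, h2]
      _ = gg a i (n + 1) * gg a (i + 1) (n + 1) - gg a (i + 1) n * gg a i (n + 2) := by ring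
      _ = 1 := ih

/-- Every sequence of integers that is at least 2 everywhere is the quiddity
row of an infinite frieze. -/
theorem frieze_of_ge_two (a : ℤ → ℤ) (ha : ∀ i : ℤ, 2 ≤ a i) :
    ∃ m : ℤ → ℤ → ℤ, IsInfiniteFrieze m ∧ ∀ i : ℤ, m i i = a i := by
  refine ⟨fun i j => if i - 2 ≤ j then gg a i (j - i + 2).toNat else 0,
    ⟨?_, ?_, ?_, ?_, ?_⟩, ?_⟩
  · intro i j h
    dsimp only
    rw [if_neg (by omega)]
  · intro i
    dsimp only
    rw [if_pos (by omega), show (i - 2 - i + 2).toNat = 0 by omega]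
    rfl
  · intro i
    dsimp only
    rw [if_pos (by omega), show (i - 1 - i + 2).toNat = 1 by omega]
    rfl
  · intro i j hij
    dsimp only
    rw [if_pos (by omega)]
    obtain ⟨k, hk⟩ : ∃ k : ℕ, (j - i + 2).toNat = k + 1 := ⟨(j - i + 1).toNat, by omega⟩
    rw [hk]
    exact gg_pos a ha i k
  · intro i j hij
    dsimp only
    set n : ℕ := (j - i + 1).toNat with hn
    rw [if_pos (by omega : i - 2 ≤ j),
        if_pos (by omega : i + 1 - 2 ≤ j + 1),
        if_pos (by omega : i + 1 - 2 ≤ j),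
        if_pos (by omega : i - 2 ≤ j + 1),
        show (j - i + 2).toNat = n + 1 by omega,
        show (j + 1 - (i + 1) + 2).toNat = n + 1 by omega,
        show (j - (i + 1) + 2).toNat = n by omega,
        show (j + 1 - i + 2).toNat = n + 2 by omega]
    exact gg_det a i n
  · intro i
    dsimp only
    rw [if_pos (by omega), show (i - i + 2).toNat = 2 by omega]
    show a (i + (0 : ℕ)) * gg a i 1 - gg a i 0 = a i
    simp [gg]
end

section
/- Let m̃ be an infinite frieze and k ∈ ℤ. For i ∈ ℤ set ĩ = i if i ≤ k and ĩ = i − 1 if i > k; for j ∈ ℤ set j̃ = j if j < k and j̃ = j − 1 if j ≥ k. Define m : ℤ → ℤ → ℤ by: m_{ij} = 0 for j < i − 2, m_{i,i−2} = 0 and m_{i,i−1} = 1 for all i, and for i ≤ j: m_{ij} = m̃_{ĩ+1,j̃} + m̃_{ĩ,j̃} if i = k+1, m_{ij} = m̃_{ĩ,j̃−1} + m̃_{ĩ,j̃} if j = k−1, and m_{ij} = m̃_{ĩ,j̃} otherwise. Then m is an infinite frieze, and its quiddity row (a_i) satisfies a_k = 1, a_{k−1} = ã_{k−1} + 1, a_{k+1}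 = ã_k + 1, and a_i = ã_{ĩ} for all other i, where (ã_i) is the quiddity row of m̃. -/
/-- Index shift on the first (row) index: `ĩ = i` if `i ≤ k`, else `i - 1`. -/
def insIdxRow (k i : ℤ) : ℤ := if i ≤ k then i else i - 1

/-- Index shift on the second (column) index: `j̃ = j` if `j < k`, else `j - 1`. -/
def insIdxCol (k j : ℤ) : ℤ := if j < k then j else j - 1

/-- The frieze obtained from `mt` by inserting a new quiddity entry `1` at
position `k` (and increasing the neighbouring quiddity entries by 1). -/
def insertOne (mt : ℤ → ℤ → ℤ) (k : ℤ) : ℤ → ℤ → ℤ := fun i j =>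
  if i ≤ j then
    if i = k + 1 then mt (insIdxRow k i + 1) (insIdxCol k j) + mt (insIdxRow k i) (insIdxCol k j)
    else if j = k - 1 then mt (insIdxRow k i) (insIdxCol k j - 1) + mt (insIdxRow k i) (insIdxCol k j)
    else mt (insIdxRow k i) (insIdxCol k j)
  else if j = i - 1 then 1 else 0

/-- Inserting a quiddity entry `1` at position `k` in an infinite frieze yields
again an infinite frieze, with the stated quiddity row. -/
theorem frieze_insert_one
    (mt : ℤ → ℤ → ℤ) (hmt : IsInfiniteFrieze mt) (k : ℤ) :
    IsInfiniteFrieze (insertOne mt k) ∧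
    insertOne mt k k k = 1 ∧
    insertOne mt k (k - 1) (k - 1) = mt (k - 1) (k - 1) + 1 ∧
    insertOne mt k (k + 1) (k + 1) = mt k k + 1 ∧
    (∀ i : ℤ, i ≠ k → i ≠ k - 1 → i ≠ k + 1 →
      insertOne mt k i i = mt (insIdxRow k i) (insIdxRow k i)) := by
  obtain ⟨h0, h1, h2, h3, h4⟩ := hmt
  -- mt is everywhere nonnegative
  have hnn : ∀ a b : ℤ, 0 ≤ mt a b := by
    intro a b
    by_cases hab : a ≤ b
    · exact (h3 a b hab).le
    · by_cases hb1 : b = a - 1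
      · subst hb1; rw [h2]; norm_num
      · by_cases hb2 : b = a - 2
        · subst hb2; rw [h1]
        · rw [h0 a b (by omega)]
  -- Region A: i ≤ k, j ≤ k-2
  have hA : ∀ i j : ℤ, i ≤ k → j ≤ k - 2 → i ≤ j + 2 → insertOne mt k i j = mt i j := by
    intro i j hi hj hij
    have r1 : insIdxRow k i = i := by unfold insIdxRow; exact if_pos hi
    have c1 : insIdxCol k j = j := by unfold insIdxCol; exact if_pos (by omega)
    simp only [insertOne, r1, c1]
    by_cases h : i ≤ j
    · rw [if_pos h, if_neg (show ¬ i = k + 1 by omega), if_neg (show ¬ j = k - 1 by omega)]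
    · rw [if_neg h]
      by_cases h' : j = i - 1
      · rw [if_pos h', h', h2]
      · rw [if_neg h']
        have hj2 : j = i - 2 := by omega
        rw [hj2, h1]
  -- Region B: column k-1, row ≤ k
  have hB : ∀ i : ℤ, i ≤ k → insertOne mt k i (k - 1) = mt i (k - 2) + mt i (k - 1) := by
    intro i hi
    have r1 : insIdxRow k i = i := by unfold insIdxRow; exact if_pos hi
    have c1 : insIdxCol k (k - 1) = k - 1 := by unfold insIdxCol; exact if_pos (by omega)
    simp only [insertOne, r1, c1]
    by_cases h : i ≤ k - 1
    · rw [if_pos h, if_neg (show ¬ i = k + 1 by omega)]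
      split_ifs with hc
      · rw [show k - 1 - 1 = k - 2 by ring]
      · exact absurd (by trivial) hc
    · have hik : i = k := by omega
      rw [if_neg h]
      split_ifs with hc
      · have e1 := h1 i
        rw [show i - 2 = k - 2 by omega] at e1
        have e2 := h2 i
        rw [show i - 1 = k - 1 by omega] at e2
        rw [e1, e2]
        norm_num
      · omega
  -- Region C: row ≤ k, column ≥ k
  have hC : ∀ i j : ℤ, i ≤ k → k ≤ j → insertOne mt k i j = mt i (j - 1) := by
    intro i j hi hj
    have r1 : insIdxRow k i = i := by unfold insIdxRow; exact if_pos hi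
    have c1 : insIdxCol k j = j - 1 := by unfold insIdxCol; exact if_neg (by omega)
    simp only [insertOne, r1, c1]
    rw [if_pos (show i ≤ j by omega), if_neg (show ¬ i = k + 1 by omega),
      if_neg (show ¬ j = k - 1 by omega)]
  -- Region D: row k+1, column ≥ k
  have hD : ∀ j : ℤ, k ≤ j → insertOne mt k (k + 1) j = mt (k + 1) (j - 1) + mt k (j - 1) := by
    intro j hj
    have r1 : insIdxRow k (k + 1) = k := by
      unfold insIdxRow; rw [if_neg (by omega)]; ring
    have c1 : insIdxCol k j = j - 1 := by unfold insIdxCol; exact if_neg (by omega)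
    simp only [insertOne, r1, c1]
    by_cases h : k + 1 ≤ j
    · rw [if_pos h]
      split_ifs with hc
      · rfl
      · exact absurd (by trivial) hc
    · have hj0 : j = k := by omega
      rw [if_neg h]
      split_ifs with hc
      · have e1 := h1 (k + 1)
        rw [show k + 1 - 2 = j - 1 by omega] at e1
        have e2 := h2 k
        rw [show k - 1 = j - 1 by omega] at e2
        rw [e1, e2]
        norm_num
      · omega
  -- Region E: row ≥ k+2
  have hE : ∀ i j : ℤ, k + 2 ≤ i → i ≤ j + 2 → insertOne mt k i j = mt (i - 1) (j - 1) := by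
    intro i j hi hij
    have r1 : insIdxRow k i = i - 1 := by unfold insIdxRow; exact if_neg (by omega)
    have c1 : insIdxCol k j = j - 1 := by unfold insIdxCol; exact if_neg (by omega)
    simp only [insertOne, r1, c1]
    by_cases h : i ≤ j
    · rw [if_pos h, if_neg (show ¬ i = k + 1 by omega), if_neg (show ¬ j = k - 1 by omega)]
    · rw [if_neg h]
      by_cases h' : j = i - 1
      · rw [if_pos h', h']
        exact (h2 (i - 1)).symm
      · rw [if_neg h']
        have hj2 : j = i - 2 := by omega
        have e1 := h1 (i - 1)
        rw [show i - 1 - 2 = i - 2 - 1 by ring] at e1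
        rw [hj2, e1]
  -- Special value at (k+1, k-1)
  have hZ : insertOne mt k (k + 1) (k - 1) = 0 := by
    simp only [insertOne]
    rw [if_neg (show ¬ k + 1 ≤ k - 1 by omega), if_neg (show ¬ k - 1 = k + 1 - 1 by omega)]
  refine ⟨⟨?_, ?_, ?_, ?_, ?_⟩, ?_, ?_, ?_, ?_⟩
  · -- zeros far below diagonal
    intro i j h
    simp only [insertOne]
    rw [if_neg (show ¬ i ≤ j by omega), if_neg (show ¬ j = i - 1 by omega)]
  · intro i
    simp only [insertOne]
    rw [if_neg (show ¬ i ≤ i - 2 by omega), if_neg (show ¬ i - 2 = i - 1 by omega)]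
  · intro i
    simp only [insertOne]
    rw [if_neg (show ¬ i ≤ i - 1 by omega)]
    split_ifs with hc
    · rfl
    · exact absurd (by trivial) hc
  · -- positivity
    intro i j hij
    by_cases hi3 : k + 2 ≤ i
    · rw [hE i j hi3 (by omega)]
      exact h3 _ _ (by omega)
    · by_cases hi2 : i = k + 1
      · subst hi2
        rw [hD j (by omega)]
        have p1 := h3 k (j - 1) (by omega)
        have p2 := hnn (k + 1) (j - 1)
        linarith
      · -- i ≤ k
        have hi : i ≤ k := by omega
        by_cases hja : j ≤ k - 2
        · rw [hA i j hi hja (by omega)]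
          exact h3 _ _ hij
        · by_cases hjb : j = k - 1
          · subst hjb
            rw [hB i hi]
            have p1 := h3 i (k - 1) (by omega)
            have p2 := hnn i (k - 2)
            linarith
          · have hjk : k ≤ j := by omega
            rw [hC i j hi hjk]
            by_cases h' : i ≤ j - 1
            · exact h3 _ _ h'
            · have hik : i = k := by omega
              have hjj : j = k := by omega
              subst hik
              subst hjj
              rw [h2]
              norm_num
  · -- unimodular rule
    intro i j hij
    by_cases h1j : j ≤ k - 2
    · by_cases h2j : j ≤ k - 3
      · rw [hA i j (by omega) (by omega) (by omega),
          hA (i + 1) j (by omega) (by omega) (by omega),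
          hA i (j + 1) (by omega) (by omega) (by omega),
          hA (i + 1) (j + 1) (by omega) (by omega) (by omega)]
        exact h4 i j hij
      · have hj : j = k - 2 := by omega
        subst hj
        rw [show k - 2 + 1 = k - 1 by ring,
          hA i (k - 2) (by omega) (by omega) (by omega),
          hA (i + 1) (k - 2) (by omega) (by omega) (by omega),
          hB i (by omega), hB (i + 1) (by omega)]
        have H := h4 i (k - 2) (by omega)
        rw [show k - 2 + 1 = k - 1 by ring] at H
        linear_combination H
    · by_cases hj1 : j = k - 1
      · subst hj1
        rw [show k - 1 + 1 = k by ring]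
        by_cases hik : i ≤ k - 1
        · rw [hB i (by omega), hB (i + 1) (by omega),
            hC i k (by omega) le_rfl, hC (i + 1) k (by omega) le_rfl]
          have H := h4 i (k - 2) (by omega)
          rw [show k - 2 + 1 = k - 1 by ring] at H
          linear_combination H
        · have hik' : i = k := by omega
          subst hik'
          rw [hB i le_rfl, hC i i le_rfl le_rfl, hZ, hD i le_rfl]
          have e1 := h1 i
          have e2 := h2 i
          have e3 := h1 (i + 1)
          rw [show i + 1 - 2 = i - 1 by ring] at e3
          rw [e1, e2, e3]
          norm_num
      · have hjk : k ≤ j := by omega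
        by_cases hi1 : i ≤ k - 1
        · rw [hC i j (by omega) hjk, hC (i + 1) j (by omega) hjk,
            hC i (j + 1) (by omega) (by omega), hC (i + 1) (j + 1) (by omega) (by omega),
            show j + 1 - 1 = j by ring]
          have H := h4 i (j - 1) (by omega)
          rw [show j - 1 + 1 = j by ring] at H
          linear_combination H
        · by_cases hi2 : i = k
          · subst hi2
            rw [hC i j le_rfl hjk, hC i (j + 1) le_rfl (by omega),
              hD j hjk, hD (j + 1) (by omega), show j + 1 - 1 = j by ring]
            have H := h4 i (j - 1) (by omega)
            rw [show j - 1 + 1 = j by ring] at H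
            linear_combination H
          · by_cases hi3 : i = k + 1
            · subst hi3
              rw [hD j (by omega), hD (j + 1) (by omega),
                hE (k + 1 + 1) j (by omega) (by omega),
                hE (k + 1 + 1) (j + 1) (by omega) (by omega),
                show k + 1 + 1 - 1 = k + 1 by ring, show j + 1 - 1 = j by ring]
              have H := h4 k (j - 1) (by omega)
              rw [show j - 1 + 1 = j by ring] at H
              linear_combination H
            · rw [hE i j (by omega) (by omega), hE (i + 1) j (by omega) (by omega),
                hE i (j + 1) (by omega) (by omega), hE (i + 1) (j + 1) (by omega) (by omega),
                show i + 1 - 1 = i by ring, show j + 1 - 1 = j by ring]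
              have H := h4 (i - 1) (j - 1) (by omega)
              rw [show i - 1 + 1 = i by ring, show j - 1 + 1 = j by ring] at H
              linear_combination H
  · -- a_k = 1
    rw [hC k k le_rfl le_rfl]
    exact h2 k
  · -- a_{k-1}
    rw [hB (k - 1) (by omega)]
    have e := h2 (k - 1)
    rw [show k - 1 - 1 = k - 2 by ring] at e
    rw [e]
    ring
  · -- a_{k+1}
    rw [hD (k + 1) (by omega), show k + 1 - 1 = k by ring]
    have e := h2 (k + 1)
    rw [show k + 1 - 1 = k by ring] at e
    rw [e]
    ring
  · -- generic quiddity entries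
    intro i hne hne1 hne2
    by_cases h : i ≤ k
    · have r1 : insIdxRow k i = i := by unfold insIdxRow; exact if_pos h
      rw [hA i i h (by omega) (by omega), r1]
    · have r1 : insIdxRow k i = i - 1 := by unfold insIdxRow; exact if_neg h
      rw [hE i i (by omega) (by omega), r1]
end

section
/- For every integer a ≥ 4, the 2-periodic sequence (a_i)_{i∈ℤ} defined by a_i = 1 for i even and a_i = a for i odd is the quiddity row of an infinite frieze. -/
def qd (a : ℤ) (j : ℤ) : ℤ := if Even j then 1 else a

def fr (a i : ℤ) : ℕ → ℤ
  | 0 => 0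
  | 1 => 1
  | (n+2) => qd a (i + n) * fr a i (n+1) - fr a i n

lemma fr_zero (a i : ℤ) : fr a i 0 = 0 := rfl
lemma fr_one (a i : ℤ) : fr a i 1 = 1 := rfl
lemma fr_step (a i : ℤ) (n : ℕ) :
    fr a i (n+2) = qd a (i + n) * fr a i (n+1) - fr a i n := rfl

lemma qd_even (a : ℤ) {j : ℤ} (h : Even j) : qd a j = 1 := if_pos h
lemma qd_odd (a : ℤ) {j : ℤ} (h : ¬ Even j) : qd a j = a := if_neg h
lemma fr_inv (a i : ℤ) (ha : 4 ≤ a) : ∀ n : ℕ,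
    (1 ≤ fr a i (n+1) ∧ (¬ Even (i + (n:ℤ)) → 2 * fr a i (n+1) ≤ fr a i (n+2))) ∧
    (1 ≤ fr a i (n+2) ∧ (¬ Even (i + (n:ℤ) + 1) → 2 * fr a i (n+2) ≤ fr a i (n+3))) := by
  have e2 : fr a i 2 = qd a i := by
    have := fr_step a i 0; simp [fr_one, fr_zero] at this; simpa using this
  intro n
  induction n with
  | zero =>
    have e3 : fr a i 3 = qd a (i+1) * fr a i 2 - 1 := by
      have := fr_step a i 1; push_cast at this; simpa [fr_one] using this
    push_cast
    simp only [zero_add, add_zero]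
    refine ⟨⟨le_of_eq (fr_one a i).symm, fun h => ?_⟩, ?_, fun h => ?_⟩
    · rw [fr_one, e2, qd_odd a h]; linarith
    · rw [e2, qd]; split <;> linarith
    · have hi : Even i := by
        rw [Int.even_iff] at *; omega
      rw [e2, e3, e2, qd_even a hi, qd_odd a h]; linarith
  | succ n ih =>
    obtain ⟨⟨h1, h2⟩, h3, h4⟩ := ih
    have c1 : ((n+1 : ℕ) : ℤ) = (n:ℤ) + 1 := by push_cast; ring
    have key1 : 1 ≤ fr a i (n+3) := by
      by_cases h : Even (i + (n:ℤ) + 1)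
      · have hodd : ¬ Even (i + (n:ℤ)) := by rw [Int.even_iff] at *; omega
        have h2' := h2 hodd
        have e : fr a i (n+3) = qd a (i + ((n:ℕ)+1 : ℕ)) * fr a i (n+2) - fr a i (n+1) :=
          fr_step a i (n+1)
        rw [c1, ← add_assoc, qd_even a h] at e
        linarith
      · have := h4 h; linarith
    have key2 : ¬ Even (i + (n:ℤ) + 1 + 1) → 2 * fr a i (n+3) ≤ fr a i (n+4) := by
      intro h
      have hev : Even (i + (n:ℤ) + 1) := by rw [Int.even_iff] at *; omega
      have hodd : ¬ Even (i + (n:ℤ)) := by rw [Int.even_iff] at *; omega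
      have h2' := h2 hodd
      have e : fr a i (n+3) = qd a (i + ((n:ℕ)+1 : ℕ)) * fr a i (n+2) - fr a i (n+1) :=
        fr_step a i (n+1)
      rw [c1, ← add_assoc, qd_even a hev] at e
      have e' : fr a i (n+4) = qd a (i + ((n:ℕ)+2 : ℕ)) * fr a i (n+3) - fr a i (n+2) :=
        fr_step a i (n+2)
      have c2 : ((n+2 : ℕ) : ℤ) = (n:ℤ) + 1 + 1 := by push_cast; ring
      rw [c2, show i + ((n:ℤ)+1+1) = i + (n:ℤ) + 1 + 1 from by ring, qd_odd a h] at e'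
      nlinarith [key1]
    refine ⟨⟨h3, fun h => h4 (by rw [c1, ← add_assoc] at h; exact h)⟩, ?_, ?_⟩
    · show 1 ≤ fr a i (n+3)
      exact key1
    · show ¬ Even (i + ((n:ℕ)+1:ℕ) + 1) → 2 * fr a i (n+3) ≤ fr a i (n+4)
      rw [c1, ← add_assoc]; exact key2

lemma fr_pos (a i : ℤ) (ha : 4 ≤ a) (n : ℕ) : 1 ≤ fr a i (n+1) :=
  ((fr_inv a i ha n).1).1

lemma fr_det (a i : ℤ) : ∀ n : ℕ,
    fr a i (n+1) * fr a (i+1) (n+1) - fr a (i+1) n * fr a i (n+2) = 1 := by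
  intro n
  induction n with
  | zero =>
    rw [fr_one, fr_one, fr_zero]; ring
  | succ n ih =>
    have e1 : fr a (i+1) (n+2) = qd a (i + ((n:ℤ)+1)) * fr a (i+1) (n+1) - fr a (i+1) n := by
      have := fr_step a (i+1) n
      rw [show (i+1) + (n:ℤ) = i + ((n:ℤ)+1) from by ring] at this
      exact this
    have e2 : fr a i (n+3) = qd a (i + ((n:ℤ)+1)) * fr a i (n+2) - fr a i (n+1) := by
      have := fr_step a i (n+1)
      rw [show ((n+1:ℕ):ℤ) = (n:ℤ)+1 from by push_cast; ring] at this
      exact this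
    show fr a i (n+2) * fr a (i+1) (n+2) - fr a (i+1) (n+1) * fr a i (n+3) = 1
    rw [e1, e2]
    linear_combination ih

def mz (a : ℤ) : ℤ → ℤ → ℤ := fun i j => if j < i - 2 then 0 else fr a i (j - i + 2).toNat

lemma fr_two (a i : ℤ) : fr a i 2 = qd a i := by
  have := fr_step a i 0
  rw [fr_one, fr_zero] at this
  simpa using this

/-- For every integer `a ≥ 4`, the 2-periodic sequence `(…,1,a,1,a,…)` with 1's
in the even positions is the quiddity row of an infinite frieze. -/
theorem frieze_one_a (a : ℤ) (ha : 4 ≤ a) :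
    ∃ m : ℤ → ℤ → ℤ, IsInfiniteFrieze m ∧
      ∀ i : ℤ, m i i = if Even i then 1 else a := by
  refine ⟨mz a, ⟨?_, ?_, ?_, ?_, ?_⟩, ?_⟩
  · intro i j h
    simp only [mz]
    rw [if_pos h]
  · intro i
    simp only [mz]
    rw [if_neg (by omega), show (i - 2 - i + 2).toNat = 0 from by omega, fr_zero]
  · intro i
    simp only [mz]
    rw [if_neg (by omega), show (i - 1 - i + 2).toNat = 1 from by omega, fr_one]
  · intro i j h
    simp only [mz]
    rw [if_neg (by omega), show (j - i + 2).toNat = (j - i + 1).toNat + 1 from by omega]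
    exact lt_of_lt_of_le one_pos (fr_pos a i ha _)
  · intro i j h
    simp only [mz]
    set n := (j - i + 1).toNat with hn
    rw [if_neg (by omega), if_neg (by omega), if_neg (by omega), if_neg (by omega),
      show (j - i + 2).toNat = n + 1 from by omega,
      show (j + 1 - i + 2).toNat = n + 2 from by omega,
      show (j - (i+1) + 2).toNat = n from by omega,
      show (j + 1 - (i+1) + 2).toNat = n + 1 from by omega]
    exact fr_det a i n
  · intro i
    simp only [mz]
    rw [if_neg (show ¬ i < i - 2 from by omega),
      show (i - i + 2).toNat = 2 from by omega, fr_two]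
    rfl
end

section
/- There is no infinite frieze whose quiddity row is the 2-periodic sequence with a_i = 1 for i even and a_i = 2 for i odd. -/
/-- There is no infinite frieze whose quiddity row is the 2-periodic sequence
`(…,1,2,1,2,…)` with 1's in the even positions. -/
theorem no_frieze_one_two :
    ¬ ∃ m : ℤ → ℤ → ℤ, IsInfiniteFrieze m ∧
      ∀ i : ℤ, m i i = if Even i then 1 else 2 := by
  rintro ⟨m, ⟨-, -, h1, hpos, hdiam⟩, hq⟩
  have q0 : m 0 0 = 1 := by simpa using hq 0
  have q1 : m 1 1 = 2 := by
    have := hq 1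
    simp [Int.even_iff] at this
    exact this
  have q2 : m 2 2 = 1 := by
    have := hq 2
    simp [Int.even_iff] at this
    exact this
  have e10 : m 1 0 = 1 := by simpa using h1 1
  have e21 : m 2 1 = 1 := by simpa using h1 2
  have d00 := hdiam 0 0 (by norm_num)
  have d11 := hdiam 1 1 (by norm_num)
  have d01 := hdiam 0 1 (by norm_num)
  have p02 := hpos 0 2 (by norm_num)
  norm_num [q0, q1, q2, e10, e21] at d00 d11 d01
  -- d00 : m 0 1 = 1, d11 : m 1 2 = 1, then d01 forces m 0 2 = 0
  have a : m 0 1 = 1 := by omega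
  have b : m 1 2 = 1 := by omega
  rw [a, b] at d01
  omega
end

section
/- There is no infinite frieze whose quiddity row is the 2-periodic sequence with a_i = 1 for i even and a_i = 3 for i odd. -/
/-- There is no infinite frieze whose quiddity row is the 2-periodic sequence
`(…,1,3,1,3,…)` with 1's in the even positions. -/
theorem no_frieze_one_three :
    ¬ ∃ m : ℤ → ℤ → ℤ, IsInfiniteFrieze m ∧
      ∀ i : ℤ, m i i = if Even i then 1 else 3 := by
  rintro ⟨m, ⟨-, -, h2, h3, h4⟩, hq⟩
  -- quiddity values
  have q0 : m 0 0 = 1 := by have := hq 0; rwa [if_pos (by decide)] at this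
  have q1 : m 1 1 = 3 := by have := hq 1; rwa [if_neg (by decide)] at this
  have q2 : m 2 2 = 1 := by have := hq 2; rwa [if_pos (by decide)] at this
  have q3 : m 3 3 = 3 := by have := hq 3; rwa [if_neg (by decide)] at this
  have q4 : m 4 4 = 1 := by have := hq 4; rwa [if_pos (by decide)] at this
  -- superdiagonal 1's
  have b1 : m 1 0 = 1 := by have := h2 1; norm_num at this; exact this
  have b2 : m 2 1 = 1 := by have := h2 2; norm_num at this; exact this
  have b3 : m 3 2 = 1 := by have := h2 3; norm_num at this; exact this
  have b4 : m 4 3 = 1 := by have := h2 4; norm_num at this; exact this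
  -- diamond relations
  have d00 := h4 0 0 (by norm_num)
  have d11 := h4 1 1 (by norm_num)
  have d22 := h4 2 2 (by norm_num)
  have d33 := h4 3 3 (by norm_num)
  norm_num at d00 d11 d22 d33
  rw [q0, q1, b1] at d00
  rw [q1, q2, b2] at d11
  rw [q2, q3, b3] at d22
  rw [q3, q4, b4] at d33
  have e01 : m 0 1 = 2 := by omega
  have e12 : m 1 2 = 2 := by omega
  have e23 : m 2 3 = 2 := by omega
  have e34 : m 3 4 = 2 := by omega
  have d01 := h4 0 1 (by norm_num)
  have d12 := h4 1 2 (by norm_num)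
  have d23 := h4 2 3 (by norm_num)
  norm_num at d01 d12 d23
  rw [e01, e12, q1] at d01
  rw [e12, e23, q2] at d12
  rw [e23, e34, q3] at d23
  have e02 : m 0 2 = 1 := by omega
  have e24 : m 2 4 = 1 := by omega
  have e13 : m 1 3 = 3 := by omega
  have d02 := h4 0 2 (by norm_num)
  have d13 := h4 1 3 (by norm_num)
  norm_num at d02 d13
  rw [e02, e13, e12] at d02
  rw [e13, e24, e23] at d13
  have e03 : m 0 3 = 1 := by omega
  have e14 : m 1 4 = 1 := by omega
  have d03 := h4 0 3 (by norm_num)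
  norm_num at d03
  rw [e03, e14, e13] at d03
  have e04 : m 0 4 = 0 := by omega
  have := h3 0 4 (by norm_num)
  omega
end
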